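/- Assume M is a quasi-thin cancellative monoid. Then M is quasi-atomic if and only if the group of units M^* is closed under conjugation in M, i.e., if xu = u'x holds with u a unit, then u' is a unit. -/

import Mathlib

open scoped Pointwise

variable {M : Type*} [Monoid M]

/-- `x` is a left divisor of `y`. -/
def LDvd (x y : M) : Prop := ∃ c, y = x * c

/-- `x` is a proper left divisor of `y`. -/
def PDvd (x y : M) : Prop := ∃ c, ¬ IsUnit c ∧ y = x * c

/-- `x ≃ y`: `y = x * u` for some unit `u`. -/
def AssocU (x y : M) : Prop := ∃ u : M, IsUnit u ∧ y = x * u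

/-- The set of units of a monoid. -/
def UnitsSet (N : Type*) [Monoid N] : Set N := {u : N | IsUnit u}

/-- `S` spans `M` (Definition 2.2). -/
def Spans (S : Set M) : Prop :=
  Submonoid.closure S = ⊤ ∧ (1 : M) ∈ S ∧
  (∀ x ∈ S, ∀ u : M, IsUnit u → x * u ∈ S) ∧
  ∀ x ∈ S, ∀ y ∈ S, ∀ z : M, LDvd x z → LDvd y z →
    ∃ x' ∈ S, ∃ y' ∈ S, x * y' = y * x' ∧ LDvd (x * y') z

/-- `S` quasi-spans `M`: `S M^*` spans `M`. -/
def QuasiSpans (S : Set M) : Prop := Spans (S * UnitsSet M)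

/-- Condition (2.2). -/
def Cond22 (S : Set M) : Prop :=
  ∀ x ∈ S, ∀ y ∈ S, ∀ x'' y'' : M, x * y'' = y * x'' →
    ∃ x' ∈ S, ∃ y' ∈ S, ∃ z : M, x * y' = y * x' ∧ x'' = x' * z ∧ y'' = y' * z

/-- `x` is an atom: not a unit, and in any factorization one factor is a unit. -/
def IsAtomM (x : M) : Prop := ¬ IsUnit x ∧ ∀ y z : M, x = y * z → IsUnit y ∨ IsUnit z

/-- `z` is a minimal common right multiple (mcm) of `x` and `y`. -/
def Mcm (x y z : M) : Prop :=
  LDvd x z ∧ LDvd y z ∧ ∀ z', PDvd z' z → ¬ (LDvd x z' ∧ LDvd y z')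

/-- `x` is `S`-simple. -/
def SSimple (S : Set M) (x : M) : Prop :=
  ∀ y, PDvd y x → {d : M | LDvd d y} ∩ S ≠ {d : M | LDvd d x} ∩ S

/-! Let `S` span `M` with `S ⊆ F M^*`, `F` finite. Reading a factorization `a₁ ⋯ aₙ` of `s y`
(`s ∈ S`) letter by letter, the reversing property of a spanning set gives `s'ᵢ ∈ S` and `Qᵢ`
with `a₁ ⋯ aᵢ s'ᵢ = s Qᵢ`. If the `Qᵢ` stayed units for `|F| + 1` steps, two of the `s'ᵢ` would
be associated, say `s'ᵢ ≃ s'ⱼ` with `i < j`, and then `P = aᵢ₊₁ ⋯ aⱼ` would satisfy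
`s'ᵢ u = P s'ᵢ` for a unit `u`; closure of `M^*` under conjugation would make this nonempty
product of non-units a unit. Hence every `|F|` letters split off a non-unit left factor of `y`,
which bounds the lengths of the factorizations into non-units of every product of elements of
`S`, that is, of every element of `M`; the maximal such length is a length function.
Conversely `l x ≥ l (x u) = l (u' x) ≥ l u' + l x`. -/

section Factorizations

def factorizationLengths (x : M) : Set ℕ :=
  {n | ∃ L : List M, (∀ c ∈ L, ¬ IsUnit c) ∧ L.prod = x ∧ L.length = n}

noncomputable def maxFactorizationLength (x : M) : ℕ := sSup (factorizationLengths x)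

theorem eq_nil_of_isUnit_prod [IsDedekindFiniteMonoid M] {L : List M}
    (hL : ∀ c ∈ L, ¬ IsUnit c) (hu : IsUnit L.prod) : L = [] := by
  rcases L with _ | ⟨c, T⟩
  · rfl
  · rw [List.prod_cons, IsUnit.mul_iff] at hu
    exact absurd hu.1 (hL c List.mem_cons_self)

theorem one_mem_factorizationLengths {x : M} (hx : ¬ IsUnit x) : 1 ∈ factorizationLengths x :=
  ⟨[x], by simpa using hx, List.prod_singleton, rfl⟩

theorem factorizationLengths_subset_zero [IsDedekindFiniteMonoid M] {x : M} (hx : IsUnit x) :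
    factorizationLengths x ⊆ {0} := by
  rintro _ ⟨L, hL, rfl, rfl⟩
  simp [eq_nil_of_isUnit_prod hL hx]

theorem add_mem_factorizationLengths_mul {x y : M} {a b : ℕ} (ha : a ∈ factorizationLengths x)
    (hb : b ∈ factorizationLengths y) : a + b ∈ factorizationLengths (x * y) := by
  obtain ⟨L₁, h₁, rfl, rfl⟩ := ha
  obtain ⟨L₂, h₂, rfl, rfl⟩ := hb
  refine ⟨L₁ ++ L₂, fun c hc => ?_, List.prod_append, List.length_append⟩
  exact (List.mem_append.mp hc).elim (h₁ c) (h₂ c)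

theorem mem_factorizationLengths_units_mul (u : Mˣ) {y : M} {n : ℕ}
    (hn : n ∈ factorizationLengths y) (hn0 : n ≠ 0) : n ∈ factorizationLengths (u * y) := by
  obtain ⟨_ | ⟨c, T⟩, hL, rfl, rfl⟩ := hn
  · exact absurd rfl hn0
  · refine ⟨(u * c) :: T, ?_, by simp [mul_assoc], rfl⟩
    simpa only [List.mem_cons, forall_eq_or_imp, Units.isUnit_units_mul] using hL

theorem mem_factorizationLengths_mul_units (u : Mˣ) {x : M} {n : ℕ}
    (hn : n ∈ factorizationLengths x) (hn0 : n ≠ 0) : n ∈ factorizationLengths (x * u) := by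
  obtain ⟨L, hL, rfl, rfl⟩ := hn
  obtain rfl | ⟨T, c, rfl⟩ := L.eq_nil_or_concat'
  · exact absurd rfl hn0
  · refine ⟨T ++ [c * u], ?_, by simp [mul_assoc], by simp⟩
    simpa only [List.mem_append, List.mem_singleton, or_imp, forall_and, forall_eq,
      Units.isUnit_mul_units] using hL

variable (hbdd : ∀ x : M, BddAbove (factorizationLengths x))
include hbdd

theorem maxFactorizationLength_le_units_mul (u : Mˣ) (y : M) :
    maxFactorizationLength y ≤ maxFactorizationLength (u * y) := by
  refine csSup_le' fun n hn => ?_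
  rcases eq_or_ne n 0 with rfl | hn0
  · exact Nat.zero_le _
  · exact le_csSup (hbdd _) (mem_factorizationLengths_units_mul u hn hn0)

theorem maxFactorizationLength_le_mul_units (u : Mˣ) (x : M) :
    maxFactorizationLength x ≤ maxFactorizationLength (x * u) := by
  refine csSup_le' fun n hn => ?_
  rcases eq_or_ne n 0 with rfl | hn0
  · exact Nat.zero_le _
  · exact le_csSup (hbdd _) (mem_factorizationLengths_mul_units u hn hn0)

theorem maxFactorizationLength_add_le [IsDedekindFiniteMonoid M] (x y : M) :
    maxFactorizationLength x + maxFactorizationLength y ≤ maxFactorizationLength (x * y) := by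
  have hzero {z : M} (hz : IsUnit z) : maxFactorizationLength z = 0 :=
    Nat.le_zero.mp (csSup_le' fun _ hn => (factorizationLengths_subset_zero hz hn).le)
  by_cases hx : IsUnit x
  · rw [hzero hx, zero_add, ← hx.unit_spec]
    exact maxFactorizationLength_le_units_mul hbdd _ y
  by_cases hy : IsUnit y
  · rw [hzero hy, add_zero, ← hy.unit_spec]
    exact maxFactorizationLength_le_mul_units hbdd _ x
  exact le_csSup (hbdd _) (add_mem_factorizationLengths_mul
    (Nat.sSup_mem ⟨1, one_mem_factorizationLengths hx⟩ (hbdd x))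
    (Nat.sSup_mem ⟨1, one_mem_factorizationLengths hy⟩ (hbdd y)))

theorem isUnit_of_maxFactorizationLength_eq_zero {x : M} (hx : maxFactorizationLength x = 0) :
    IsUnit x := by
  by_contra hxu
  have h1 : 1 ≤ maxFactorizationLength x := le_csSup (hbdd x) (one_mem_factorizationLengths hxu)
  omega

end Factorizations

theorem isUnit_of_mul_eq_mul_of_superadditive {l : M → ℕ} (hl0 : ∀ x, l x = 0 → IsUnit x)
    (hadd : ∀ x y, l x + l y ≤ l (x * y)) {x u u' : M} (hu : IsUnit u) (h : x * u = u' * x) :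
    IsUnit u' := by
  obtain ⟨v, hv⟩ := hu.exists_right_inv
  have hx := hadd (x * u) v
  have hu' := hadd u' x
  rw [mul_assoc, hv, mul_one] at hx
  rw [← h] at hu'
  exact hl0 u' (by omega)

theorem isUnit_of_associated_mul_of_associated
    (hconj : ∀ x u u' : M, IsUnit u → x * u = u' * x → IsUnit u') {P g g' : M}
    (h : Associated g (P * g')) (hg : Associated g g') : IsUnit P := by
  obtain ⟨u, hu⟩ := h
  obtain ⟨w, rfl⟩ := hg
  refine hconj g ↑(u * w⁻¹) P (Units.isUnit _) ?_
  rw [Units.val_mul, ← mul_assoc, hu, ← mul_assoc, Units.mul_inv_cancel_right]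

theorem not_associated_of_lt_of_associated_take [IsLeftCancelMul M]
    (hconj : ∀ x u u' : M, IsUnit u → x * u = u' * x → IsUnit u') {L : List M}
    (hL : ∀ c ∈ L, ¬ IsUnit c) {i j : ℕ} (hij : i < j) (hjL : j ≤ L.length) {s g g' : M}
    (hg : Associated s ((L.take i).prod * g)) (hg' : Associated s ((L.take j).prod * g')) :
    ¬ Associated g g' := by
  intro hassoc
  set P := (L.drop i).take (j - i)
  have hP : (L.take j).prod = (L.take i).prod * P.prod := by
    rw [← List.prod_append, ← List.take_add, Nat.add_sub_cancel' hij.le]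
  have hPg : Associated g (P.prod * g') := by
    obtain ⟨u, hu⟩ := hg.symm.trans hg'
    rw [hP, mul_assoc, mul_assoc] at hu
    exact ⟨u, mul_left_cancel hu⟩
  have hPne : P ≠ [] := by
    simp only [P, ne_eq, List.take_eq_nil_iff, List.drop_eq_nil_iff]
    omega
  exact hPne (eq_nil_of_isUnit_prod
    (fun c hc => hL c (List.drop_subset _ _ (List.take_subset _ _ hc)))
    (isUnit_of_associated_mul_of_associated hconj hPg hassoc))

section Spanning

variable {S : Set M}

theorem Spans.exists_dvd_of_dvd_mul [IsLeftCancelMul M] (hS : Spans S) (y : M) {s w : M}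
    (hs : s ∈ S) (h : s ∣ y * w) : ∃ s' ∈ S, s' ∣ w ∧ s ∣ y * s' := by
  have hy : y ∈ Submonoid.closure S := hS.1 ▸ Submonoid.mem_top y
  induction hy using Submonoid.closure_induction_left generalizing s w with
  | one => exact ⟨s, hs, by simpa using h, by simp⟩
  | mul_left x hx y _ ih =>
    obtain ⟨x', hx', y', -, heq, hdvd⟩ :=
      hS.2.2.2 s hs x hx _ (by rwa [mul_assoc] at h) (Dvd.intro _ rfl)
    obtain ⟨s', hs', hs'w, hx's'⟩ := ih hx' (w := w) <| by
      obtain ⟨c, hc⟩ := hdvd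
      rw [heq, mul_assoc] at hc
      exact ⟨c, mul_left_cancel hc⟩
    refine ⟨s', hs', hs'w, (Dvd.intro y' heq).trans ?_⟩
    rw [mul_assoc]
    exact mul_dvd_mul_left x hx's'

theorem exists_associated_of_subset_mul_units {F : Finset M} (hSF : S ⊆ ↑F * UnitsSet M)
    (g : ℕ → M) (hg : ∀ j ≤ F.card, g j ∈ S) :
    ∃ i j, i < j ∧ j ≤ F.card ∧ Associated (g i) (g j) := by
  have hrep : ∀ j ≤ F.card, ∃ f ∈ F, Associated f (g j) := by
    intro j hj
    obtain ⟨f, hf, u, hu, h⟩ := hSF (hg j hj)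
    exact ⟨f, hf, hu.unit, h⟩
  choose! f hfF hf using hrep
  obtain ⟨i, hi, j, hj, hne, hij⟩ := Finset.exists_ne_map_eq_of_card_lt_of_maps_to
    (s := Finset.range (F.card + 1)) (by simp) fun j hj =>
      hfF j (by simpa [Nat.lt_succ_iff] using hj)
  simp only [Finset.mem_range, Nat.lt_succ_iff] at hi hj
  have hassoc : Associated (g i) (g j) := (hf i hi).symm.trans (hij ▸ hf j hj)
  rcases Nat.lt_or_gt_of_ne hne with hlt | hlt
  · exact ⟨i, j, hlt, hj, hassoc⟩
  · exact ⟨j, i, hlt, hi, hassoc.symm⟩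

variable [IsLeftCancelMul M] {F : Finset M}
  (hS : Spans S) (hSF : S ⊆ ↑F * UnitsSet M)
  (hconj : ∀ x u u' : M, IsUnit u → x * u = u' * x → IsUnit u')
include hS hSF hconj

theorem Spans.exists_take_mul_eq_mul_not_isUnit {L : List M} (hL : ∀ c ∈ L, ¬ IsUnit c)
    (hk : F.card ≤ L.length) {s r : M} (hs : s ∈ S) (h : s ∣ L.prod * r) :
    ∃ j, 0 < j ∧ j ≤ F.card ∧ ∃ s' ∈ S, ∃ Q, ¬ IsUnit Q ∧
      (L.take j).prod * s' = s * Q ∧ s' ∣ (L.drop j).prod * r := by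
  by_contra! hstuck
  have chain : ∀ j ≤ F.card, ∃ g ∈ S,
      Associated s ((L.take j).prod * g) ∧ g ∣ (L.drop j).prod * r := by
    intro j hj
    induction j with
    | zero => exact ⟨s, hs, by simp, by simpa using h⟩
    | succ j ih =>
      obtain ⟨g, hg, ⟨U, hU⟩, hgd⟩ := ih (by omega)
      have hjL : j < L.length := by omega
      rw [List.drop_eq_getElem_cons hjL, List.prod_cons, mul_assoc] at hgd
      obtain ⟨g', hg', hg'd, q, hq⟩ := hS.exists_dvd_of_dvd_mul _ hg hgd
      have hkey : (L.take (j + 1)).prod * g' = s * (U * q) := by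
        rw [List.prod_take_succ _ _ hjL, mul_assoc, hq, ← mul_assoc, ← hU, mul_assoc]
      by_cases hqu : IsUnit q
      · exact ⟨g', hg', ⟨U * hqu.unit, by simpa [mul_assoc] using hkey.symm⟩, hg'd⟩
      · exact absurd hg'd (hstuck (j + 1) (by omega) hj g' hg' (U * q)
          (by simpa using hqu) hkey)
  choose! g hgS hgs using chain
  obtain ⟨i, j, hij, hj, hassoc⟩ := exists_associated_of_subset_mul_units hSF g hgS
  exact not_associated_of_lt_of_associated_take hconj hL hij (by omega)
    (hgs i (by omega)).1 (hgs j hj).1 hassoc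

theorem Spans.exists_nonunits_dvd_of_prod_mul_eq (L : List M) (hL : ∀ c ∈ L, ¬ IsUnit c)
    {s r y : M} (hs : s ∈ S) (h : L.prod * r = s * y) :
    ∃ Qs : List M, (∀ Q ∈ Qs, ¬ IsUnit Q) ∧ Qs.prod ∣ y ∧
      L.length ≤ (Qs.length + 1) * F.card := by
  induction hn : L.length using Nat.strong_induction_on generalizing L s r y with
  | _ n ih =>
  by_cases hsmall : n ≤ F.card
  · exact ⟨[], by simp, by simp, by simpa [hn] using hsmall⟩
  obtain ⟨j, hj0, hjk, s', hs', Q, hQ, hkey, y', hy'⟩ :=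
    hS.exists_take_mul_eq_mul_not_isUnit hSF hconj hL (by omega) hs (Dvd.intro y h.symm)
  obtain ⟨Qs, hQs, hQsy', hlen⟩ := ih _ (by simp [← hn]; omega) (L.drop j)
    (fun c hc => hL c (List.drop_subset _ _ hc)) hs' hy' rfl
  have hy : y = Q * y' := by
    refine mul_left_cancel (a := s) ?_
    rw [← h, ← mul_assoc, ← hkey, mul_assoc, ← hy', ← mul_assoc, ← List.prod_append,
      List.take_append_drop]
  refine ⟨Q :: Qs, ?_, ?_, ?_⟩
  · simpa only [List.mem_cons, forall_eq_or_imp] using ⟨hQ, hQs⟩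
  · rw [hy, List.prod_cons]
    exact mul_dvd_mul_left Q hQsy'
  · rw [List.length_drop, hn] at hlen
    rw [List.length_cons, add_mul, one_mul]
    omega

theorem Spans.exists_length_bound_of_prod_dvd (x : M) :
    ∃ N, ∀ L : List M, (∀ c ∈ L, ¬ IsUnit c) → L.prod ∣ x → L.length ≤ N := by
  have hx : x ∈ Submonoid.closure S := hS.1 ▸ Submonoid.mem_top x
  induction hx using Submonoid.closure_induction_left with
  | one =>
    refine ⟨0, fun L hL ⟨c, hc⟩ => ?_⟩
    simp [eq_nil_of_isUnit_prod hL (IsUnit.of_mul_eq_one c hc.symm)]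
  | mul_left s hs y _ ih =>
    obtain ⟨N, hN⟩ := ih
    refine ⟨(N + 1) * F.card, fun L hL ⟨r, hr⟩ => ?_⟩
    obtain ⟨Qs, hQs, hQsy, hlen⟩ :=
      hS.exists_nonunits_dvd_of_prod_mul_eq hSF hconj L hL hs hr.symm
    exact hlen.trans (Nat.mul_le_mul_right _ (Nat.succ_le_succ (hN Qs hQs hQsy)))

end Spanning

theorem stmt12_general
    (hl : ∀ a b c : M, a * b = a * c → b = c)
    (hqthin : ∃ S : Set M, Spans S ∧
      ∃ F : Set M, F.Finite ∧ S ⊆ F * UnitsSet M) :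
    (∃ l : M → ℕ, (∀ x : M, l x = 0 → IsUnit x) ∧
        ∀ x y : M, l x + l y ≤ l (x * y)) ↔
      (∀ x u u' : M, IsUnit u → x * u = u' * x → IsUnit u') := by
  have : IsLeftCancelMul M := ⟨hl⟩
  refine ⟨fun ⟨l, hl0, hadd⟩ _ _ _ => isUnit_of_mul_eq_mul_of_superadditive hl0 hadd,
    fun hconj => ?_⟩
  obtain ⟨S, hS, F, hF, hSF⟩ := hqthin
  have hbdd (x : M) : BddAbove (factorizationLengths x) := by
    obtain ⟨N, hN⟩ := hS.exists_length_bound_of_prod_dvd (F := hF.toFinset) (by simpa using hSF)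
      hconj x
    exact ⟨N, by rintro _ ⟨L, hL, rfl, rfl⟩; exact hN L hL dvd_rfl⟩
  exact ⟨maxFactorizationLength, fun _ => isUnit_of_maxFactorizationLength_eq_zero hbdd,
    maxFactorizationLength_add_le hbdd⟩

theorem stmt12
    (hl : ∀ a b c : M, a * b = a * c → b = c)
    (hr : ∀ a b c : M, b * a = c * a → b = c)
    (hqthin : ∃ S : Set M, Spans S ∧
      ∃ F : Set M, F.Finite ∧ S ⊆ F * UnitsSet M) :
    (∃ l : M → ℕ, (∀ x : M, l x = 0 → IsUnit x) ∧
        ∀ x y : M, l x + l y ≤ l (x * y)) ↔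
      (∀ x u u' : M, IsUnit u → x * u = u' * x → IsUnit u') :=
  stmt12_general hl hqthin
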